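/- (Symmetry of Hω.) For all closed λ-terms M and N, if M =ω N then N =ω M. -/

import Mathlib

/-- Untyped λ-terms in de Bruijn representation. -/
inductive Lam : Type
  | var : ℕ → Lam
  | app : Lam → Lam → Lam
  | lam : Lam → Lam
deriving DecidableEq

namespace Lam

/-- Lift (shift) the free variables ≥ d by one. -/
def lift : ℕ → Lam → Lam
  | d, var n => if n < d then var n else var (n + 1)
  | d, app M N => app (lift d M) (lift d N)
  | d, lam M => lam (lift (d + 1) M)

/-- Capture-avoiding substitution of N for the free variable k. -/
def subst : ℕ → Lam → Lam → Lam
  | k, N, var n => if n = k then N else if k < n then var (n - 1) else var n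
  | k, N, app A B => app (subst k N A) (subst k N B)
  | k, N, lam M => lam (subst (k + 1) (lift 0 N) M)

/-- All free variables are < k. -/
def ClosedUnder : ℕ → Lam → Prop
  | k, var n => n < k
  | k, app A B => ClosedUnder k A ∧ ClosedUnder k B
  | k, lam M => ClosedUnder (k + 1) M

/-- A term is closed if it has no free variables. -/
def Closed (M : Lam) : Prop := ClosedUnder 0 M

/-- x occurs free in the term. -/
def FreeIn : ℕ → Lam → Prop
  | x, var n => n = x
  | x, app A B => FreeIn x A ∨ FreeIn x B
  | x, lam M => FreeIn (x + 1) M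

/-- The minimal number of abstractions needed to close the term. -/
def fvBound : Lam → ℕ
  | var n => n + 1
  | app A B => max (fvBound A) (fvBound B)
  | lam M => fvBound M - 1

/-- Iterated abstraction λz₁…zₙ.M. -/
def absN : ℕ → Lam → Lam
  | 0, M => M
  | n + 1, M => lam (absN n M)

/-- The λ-closure of a term: abstraction over all its free variables. -/
def close (M : Lam) : Lam := absN (fvBound M) M

/-- One-step β-reduction (closed under arbitrary contexts). -/
inductive Beta : Lam → Lam → Prop
  | beta (U V) : Beta (app (lam U) V) (subst 0 V U)
  | appL {M M'} (N) : Beta M M' → Beta (app M N) (app M' N)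
  | appR (M) {N N'} : Beta N N' → Beta (app M N) (app M N')
  | lam {M M'} : Beta M M' → Beta (lam M) (lam M')

/-- Many-step β-reduction. -/
def BetaStar : Lam → Lam → Prop := Relation.ReflTransGen Beta

/-- β-conversion. -/
def BetaConv : Lam → Lam → Prop := Relation.EqvGen Beta

def iComb : Lam := lam (var 0)
def omegaComb : Lam := lam (app (var 0) (var 0))
def Omega : Lam := app omegaComb omegaComb
def Kstar : Lam := lam (lam (var 0))

/-- Apply a term to a list of arguments: M N₁ ⋯ Nₖ. -/
def appList : Lam → List Lam → Lam
  | M, [] => M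
  | M, N :: Ns => appList (app M N) Ns

/-- A term is solvable iff its λ-closure applied to some closed terms β-converts to I. -/
def Solvable (M : Lam) : Prop :=
  ∃ Ns : List Lam, (∀ N ∈ Ns, Closed N) ∧ BetaConv (appList (close M) Ns) iComb

/-- One-step weak βΩ-reduction. -/
inductive WBO : Lam → Lam → Prop
  | wbeta (U V) : Closed (app (lam U) V) → WBO (app (lam U) V) (subst 0 V U)
  | womega (M) : Closed M → ¬ Solvable M → M ≠ Omega → WBO M Omega
  | appL {M M'} (N) : WBO M M' → WBO (app M N) (app M' N)
  | appR (M) {N N'} : WBO N N' → WBO (app M N) (app M N')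
  | lam {M M'} : WBO M M' → WBO (lam M) (lam M')

/-- Many-step weak βΩ-reduction. -/
def WBOStar : Lam → Lam → Prop := Relation.ReflTransGen WBO

/-- Weak βΩ-conversion. -/
def WBOConv : Lam → Lam → Prop := Relation.EqvGen WBO

/-- One-step full βΩ-reduction (Ω-contraction allowed on open terms,
unsolvability referring to the λ-closure). -/
inductive BO : Lam → Lam → Prop
  | beta (U V) : BO (app (lam U) V) (subst 0 V U)
  | omega (M) : ¬ Solvable M → M ≠ Omega → BO M Omega
  | appL {M M'} (N) : BO M M' → BO (app M N) (app M' N)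
  | appR (M) {N N'} : BO N N' → BO (app M N) (app M N')
  | lam {M M'} : BO M M' → BO (lam M) (lam M')

/-- Many-step full βΩ-reduction. -/
def BOStar : Lam → Lam → Prop := Relation.ReflTransGen BO

/-- Full βΩ-conversion. -/
def BOConv : Lam → Lam → Prop := Relation.EqvGen BO

/-- A term is in βΩ-normal form iff it admits no βΩ-reduction, i.e. it contains
no β-redex and no unsolvable subterm other than Ω. -/
def BONormal (M : Lam) : Prop := ∀ N, ¬ BO M N

/-- Head weak β-reduction: contraction of the head redex
λx₁…xₙ.(λx.U)V M₁⋯Mₖ → λx₁…xₙ.([V/x]U)M₁⋯Mₖ with (λx.U)V closed. -/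
inductive HeadWBeta : Lam → Lam → Prop
  | head (U V) : Closed (app (lam U) V) → HeadWBeta (app (lam U) V) (subst 0 V U)
  | app {M M'} (N) : (∀ U, M ≠ lam U) → HeadWBeta M M' → HeadWBeta (app M N) (app M' N)
  | lam {M M'} : HeadWBeta M M' → HeadWBeta (lam M) (lam M')

/-- The head variable of the term is the free variable x,
i.e. the term has the form λy₁…yᵣ. x X₁ ⋯ Xₘ. -/
inductive HeadVar : ℕ → Lam → Prop
  | var (x) : HeadVar x (var x)
  | app {x M} (N) : (∀ U, M ≠ lam U) → HeadVar x M → HeadVar x (app M N)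
  | lam {x M} : HeadVar (x + 1) M → HeadVar x (lam M)

/-- Subterm relation. -/
inductive Subterm : Lam → Lam → Prop
  | refl (M) : Subterm M M
  | appL {S M} (N) : Subterm S M → Subterm S (app M N)
  | appR (M) {S N} : Subterm S N → Subterm S (app M N)
  | lam {S M} : Subterm S M → Subterm S (lam M)

/-- A closed term is in weak βΩ head normal form iff it is unsolvable and equal
to Ω, or solvable and without a head weak β-redex. -/
def WHnf (M : Lam) : Prop :=
  (¬ Solvable M ∧ M = Omega) ∨ (Solvable M ∧ ∀ N, ¬ HeadWBeta M N)

/-- Equality in the theory Hω. -/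
inductive HOmega : Lam → Lam → Prop
  | refl (M) : Closed M → HOmega M M
  | wbetaL (U N) : Closed (app (lam U) N) → HOmega (app (lam U) N) (subst 0 N U)
  | wbetaR (U N) : Closed (app (lam U) N) → HOmega (subst 0 N U) (app (lam U) N)
  | unsolvL (M) : Closed M → ¬ Solvable M → HOmega M Omega
  | unsolvR (M) : Closed M → ¬ Solvable M → HOmega Omega M
  | leibnitz (X Y M N) : ClosedUnder 1 X → ClosedUnder 1 Y → Closed M → Closed N →
      HOmega (subst 0 M X) (subst 0 M Y) → HOmega M N →
      HOmega (subst 0 N X) (subst 0 N Y)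
  | omega_rule (P Q) : Closed P → Closed Q →
      (∀ M, Closed M → HOmega (app P M) (app Q M)) → HOmega P Q

/-- The n-fold application fⁿ z in the Church numeral. -/
def churchBody : ℕ → Lam
  | 0 => var 0
  | n + 1 => app (var 1) (churchBody n)

/-- The n-th Church numeral. -/
def church (n : ℕ) : Lam := lam (lam (churchBody n))


theorem homega_symm_general (M N : Lam) (h : HOmega M N) :
    HOmega N M := by
  induction h with
  | refl M hM => exact .refl M hM
  | wbetaL U N hUN => exact .wbetaR U N hUN
  | wbetaR U N hUN => exact .wbetaL U N hUN
  | unsolvL M hM hunsolv => exact .unsolvR M hM hunsolv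
  | unsolvR M hM hunsolv => exact .unsolvL M hM hunsolv
  | leibnitz X Y M N hX hY hM hN _ hMN ih => exact .leibnitz Y X M N hY hX hM hN ih hMN
  | omega_rule P Q hP hQ _ ih => exact .omega_rule Q P hQ hP ih

/-- Symmetry of Hω. -/
theorem homega_symm (M N : Lam) (hM : Closed M) (hN : Closed N) (h : HOmega M N) :
    HOmega N M :=
  homega_symm_general M N h

end Lam
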